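/- Let b be the number of butterflies in a bipartite graph and let b̄ satisfy b/2 ≤ b̄ ≤ 2b, with b ≥ 1 and 0 < ε < 1. Then the number of edges e with b(e) ≥ b̄^{3/4}/(2 ε^{1/4}) is at most 8·8^{1/4}·(εb)^{1/4} < 13.5·(εb)^{1/4}. -/

import Mathlib

open Real Finset

/-! Markov's inequality: at most `4b / T` edges carry `b(e) ≥ T`. With
`T = b̄^(3/4) / (2 ε^(1/4))` and `b̄ ≥ b/2` this is at most `8 b ε^(1/4) / (b/2)^(3/4)`,
and `b / (b/2)^(3/4) = 8^(1/4) b^(1/4)`; the constant `13.5 = 8 · 1.6875` bounds `8 · 8^(1/4)`. -/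

theorem card_filter_le_mul_le_sum {α : Type*} (s : Finset α) (f : α → ℝ)
    (hf : ∀ x ∈ s, 0 ≤ f x) (t : ℝ) :
    (#(s.filter (t ≤ f ·)) : ℝ) * t ≤ ∑ x ∈ s, f x :=
  calc (#(s.filter (t ≤ f ·)) : ℝ) * t
      ≤ ∑ x ∈ s.filter (t ≤ f ·), f x := by
        rw [← nsmul_eq_mul]
        exact card_nsmul_le_sum _ _ _ fun x hx => (mem_filter.mp hx).2
    _ ≤ ∑ x ∈ s, f x :=
        sum_le_sum_of_subset_of_nonneg (filter_subset _ _) fun x hx _ => hf x hx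

theorem card_filter_le_sum_div {α : Type*} (s : Finset α) (f : α → ℝ)
    (hf : ∀ x ∈ s, 0 ≤ f x) {t : ℝ} (ht : 0 < t) :
    (#(s.filter (t ≤ f ·)) : ℝ) ≤ (∑ x ∈ s, f x) / t :=
  (le_div_iff₀ ht).mpr (card_filter_le_mul_le_sum s f hf t)

theorem div_half_rpow_three_quarters {b : ℝ} (hb : 0 < b) :
    b / (b / 2) ^ ((3 : ℝ) / 4) = 8 ^ ((1 : ℝ) / 4) * b ^ ((1 : ℝ) / 4) := by
  have h8 : (8 : ℝ) ^ ((1 : ℝ) / 4) = 2 ^ ((3 : ℝ) / 4) := by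
    rw [show (8 : ℝ) = 2 ^ (3 : ℝ) by norm_num, ← rpow_mul (by norm_num)]
    norm_num
  have hsplit : b = b ^ ((3 : ℝ) / 4) * b ^ ((1 : ℝ) / 4) := by
    rw [← rpow_add hb]; norm_num
  rw [div_rpow hb.le (by norm_num), h8, div_div_eq_mul_div,
    div_eq_iff (rpow_pos_of_pos hb _).ne']
  nth_rewrite 1 [hsplit]
  ring

theorem eight_rpow_quarter_lt : (8 : ℝ) ^ ((1 : ℝ) / 4) < 1.6875 := by
  rw [show (1.6875 : ℝ) = (1.6875 ^ (4 : ℝ)) ^ ((1 : ℝ) / 4) by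
    rw [← rpow_mul (by norm_num)]; norm_num]
  exact rpow_lt_rpow (by norm_num) (by norm_num) (by norm_num)

theorem card_heavy_butterfly_edges_le_general {α : Type*} (E : Finset α)
    (bf : α → ℕ) (b : ℕ) (hb : 1 ≤ b)
    (hsum : ∑ e ∈ E, bf e = 4 * b)
    (bbar ε : ℝ) (hε0 : 0 < ε)
    (hlb : (b : ℝ) / 2 ≤ bbar) :
    ((E.filter (fun e => bbar ^ ((3 : ℝ)/4) / (2 * ε ^ ((1 : ℝ)/4)) ≤ (bf e : ℝ))).card : ℝ)
        ≤ 8 * 8 ^ ((1 : ℝ)/4) * (ε * b) ^ ((1 : ℝ)/4)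
      ∧ 8 * 8 ^ ((1 : ℝ)/4) * (ε * b) ^ ((1 : ℝ)/4)
        < 13.5 * (ε * b) ^ ((1 : ℝ)/4) := by
  have hbpos : (0 : ℝ) < b := by exact_mod_cast hb
  have hε4 : 0 < ε ^ ((1 : ℝ) / 4) := rpow_pos_of_pos hε0 _
  have hhalf : 0 < ((b : ℝ) / 2) ^ ((3 : ℝ) / 4) := rpow_pos_of_pos (by positivity) _
  have hsum' : ∑ e ∈ E, (bf e : ℝ) = 4 * b := by exact_mod_cast hsum
  refine ⟨?_, ?_⟩
  · calc _ ≤ (∑ e ∈ E, (bf e : ℝ)) / (bbar ^ ((3 : ℝ) / 4) / (2 * ε ^ ((1 : ℝ) / 4))) :=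
          card_filter_le_sum_div E _ (fun _ _ => Nat.cast_nonneg _)
            (div_pos (rpow_pos_of_pos (by linarith) _) (by positivity))
      _ = 8 * ε ^ ((1 : ℝ) / 4) * b / bbar ^ ((3 : ℝ) / 4) := by
          rw [hsum']; field_simp; ring
      _ ≤ 8 * ε ^ ((1 : ℝ) / 4) * b / ((b : ℝ) / 2) ^ ((3 : ℝ) / 4) :=
          div_le_div_of_nonneg_left (by positivity) hhalf
            (rpow_le_rpow (by positivity) hlb (by norm_num))
      _ = 8 * 8 ^ ((1 : ℝ) / 4) * (ε * b) ^ ((1 : ℝ) / 4) := by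
          rw [mul_div_assoc, div_half_rpow_three_quarters hbpos, mul_rpow hε0.le hbpos.le]
          ring
  · have hpos : 0 < (ε * b) ^ ((1 : ℝ) / 4) := rpow_pos_of_pos (by positivity) _
    nlinarith [eight_rpow_quarter_lt]

/-- If `Σ_e b(e) = 4b`, `b ≥ 1`, `0 < ε < 1` and `b/2 ≤ b̄ ≤ 2b`, then the number of
edges `e` with `b(e) ≥ b̄^(3/4) / (2 ε^(1/4))` is at most
`8 · 8^(1/4) · (εb)^(1/4) < 13.5 · (εb)^(1/4)`. -/
theorem card_heavy_butterfly_edges_le {α : Type*} (E : Finset α)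
    (bf : α → ℕ) (b : ℕ) (hb : 1 ≤ b)
    (hsum : ∑ e ∈ E, bf e = 4 * b)
    (bbar ε : ℝ) (hε0 : 0 < ε) (hε1 : ε < 1)
    (hlb : (b : ℝ) / 2 ≤ bbar) (hub : bbar ≤ 2 * b) :
    ((E.filter (fun e => bbar ^ ((3 : ℝ)/4) / (2 * ε ^ ((1 : ℝ)/4)) ≤ (bf e : ℝ))).card : ℝ)
        ≤ 8 * 8 ^ ((1 : ℝ)/4) * (ε * b) ^ ((1 : ℝ)/4)
      ∧ 8 * 8 ^ ((1 : ℝ)/4) * (ε * b) ^ ((1 : ℝ)/4)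
        < 13.5 * (ε * b) ^ ((1 : ℝ)/4) :=
  card_heavy_butterfly_edges_le_general E bf b hb hsum bbar ε hε0 hlb
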